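/- arXiv:2310.14043 — 2 statements merged into one kernel-verified Lean document; each statement's English description precedes it below -/
import Mathlib

section
/- Let n ≥ 1. For every n × n doubly stochastic matrix D, writing r_F(D) = max_{D' ∈ Ω_n} ‖D − D'‖_F, one has | r_F(D)² / ( ‖D‖_F² + n − 1 ) − 1 | ≤ 1/n. In particular, the ratio r_F(D)²/(‖D‖_F² + n) converges uniformly to 1 as n → ∞. -/
open Matrix BigOperators

/-- The matrix `J_n` with all entries equal to `1/n`. -/
noncomputable def matJ (n : ℕ) : Matrix (Fin n) (Fin n) ℝ :=
  Matrix.of fun _ _ => (n : ℝ)⁻¹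

/-- The singular values of a real square matrix: the square roots of the
eigenvalues of `Aᴴ * A` (`Aᴴ = Aᵀ` over `ℝ`). -/
noncomputable def singularValues {n : ℕ} (A : Matrix (Fin n) (Fin n) ℝ) : Fin n → ℝ :=
  fun i => Real.sqrt ((Matrix.isHermitian_conjTranspose_mul_self A).eigenvalues i)

/-- The Schatten `p`-norm of a real square matrix. -/
noncomputable def schattenNorm {n : ℕ} (p : ℝ) (A : Matrix (Fin n) (Fin n) ℝ) : ℝ :=
  (∑ i, singularValues A i ^ p) ^ (1 / p)

/-- The Frobenius norm of a real square matrix. -/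
noncomputable def frobNorm {n : ℕ} (A : Matrix (Fin n) (Fin n) ℝ) : ℝ :=
  Real.sqrt (∑ i, ∑ j, (A i j) ^ 2)

/-- The minimal trace of a square matrix: the minimum over all permutations `σ`
of `∑ i, A i (σ i)`. -/
noncomputable def trMin {n : ℕ} (A : Matrix (Fin n) (Fin n) ℝ) : ℝ :=
  ⨅ σ : Equiv.Perm (Fin n), ∑ i, A i (σ i)

/-- A matrix is a permutation matrix if it is the matrix of some permutation. -/
def IsPermMatrix {n : ℕ} (P : Matrix (Fin n) (Fin n) ℝ) : Prop :=
  ∃ σ : Equiv.Perm (Fin n), P = σ.permMatrix ℝ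

/-! For `D' ∈ Ω_n` the entries lie in `[0, 1]`, so `(D - D')ᵢⱼ² ≤ Dᵢⱼ² + D'ᵢⱼ` and
`‖D - D'‖_F² ≤ ‖D‖_F² + n`. Conversely, averaging over the `n` cyclic shifts gives a permutation
`σ` with `∑ᵢ D i (σ i) ≤ 1`, and `‖D - P_σ‖_F² = ‖D‖_F² + n - 2 ∑ᵢ D i (σ i) ≥ ‖D‖_F² + n - 2`.
So `r_F(D)²` lies within `1` of `‖D‖_F² + n - 1`, which is at least `n` since `‖D‖_F² ≥ 1` by
Cauchy–Schwarz on the rows. -/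

theorem exists_perm_card_mul_sum_apply_le {n : ℕ} [NeZero n] (A : Matrix (Fin n) (Fin n) ℝ) :
    ∃ σ : Equiv.Perm (Fin n), n * ∑ i, A i (σ i) ≤ ∑ i, ∑ j, A i j := by
  -- the cyclic shifts `i ↦ i + k`, `k : Fin n`, hit every entry exactly once
  have hshifts : ∑ k : Fin n, ∑ i, A i (i + k) = ∑ i, ∑ j, A i j := by
    rw [Finset.sum_comm]
    exact Finset.sum_congr rfl fun i _ => Fintype.sum_equiv (Equiv.addLeft i) _ _ fun _ => rfl
  obtain ⟨k, -, hk⟩ := Finset.exists_le_of_sum_le (f := fun k : Fin n => n * ∑ i, A i (i + k))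
    (g := fun _ => ∑ i, ∑ j, A i j) Finset.univ_nonempty (by simp [← Finset.mul_sum, hshifts])
  exact ⟨Equiv.addRight k, hk⟩

section Sums

variable {ι : Type*} [Fintype ι] [DecidableEq ι]

theorem one_le_sum_sq_of_mem_doublyStochastic [Nonempty ι] {D : Matrix ι ι ℝ}
    (hD : D ∈ doublyStochastic ℝ ι) : 1 ≤ ∑ i, ∑ j, D i j ^ 2 := by
  have hcard : (0 : ℝ) < Fintype.card ι := Nat.cast_pos.mpr Fintype.card_pos
  have hrow (i : ι) : 1 ≤ Fintype.card ι * ∑ j, D i j ^ 2 := by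
    simpa [sum_row_of_mem_doublyStochastic hD i] using
      sq_sum_le_card_mul_sum_sq (s := Finset.univ) (f := D i)
  have : (Fintype.card ι : ℝ) * 1 ≤ Fintype.card ι * ∑ i, ∑ j, D i j ^ 2 := by
    simpa [← Finset.mul_sum] using Finset.sum_le_sum fun i (_ : i ∈ Finset.univ) => hrow i
  exact le_of_mul_le_mul_left this hcard

theorem sub_sq_le_sq_add {a b : ℝ} (ha : 0 ≤ a) (hb₀ : 0 ≤ b) (hb₁ : b ≤ 1) :
    (a - b) ^ 2 ≤ a ^ 2 + b := by
  nlinarith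

theorem sum_sub_sq_le_of_mem_doublyStochastic {D D' : Matrix ι ι ℝ} (hD : ∀ i j, 0 ≤ D i j)
    (hD' : D' ∈ doublyStochastic ℝ ι) :
    ∑ i, ∑ j, (D - D') i j ^ 2 ≤ ∑ i, ∑ j, D i j ^ 2 + Fintype.card ι :=
  calc ∑ i, ∑ j, (D - D') i j ^ 2 ≤ ∑ i, ∑ j, (D i j ^ 2 + D' i j) :=
        Finset.sum_le_sum fun i _ => Finset.sum_le_sum fun j _ =>
          sub_sq_le_sq_add (hD i j) (nonneg_of_mem_doublyStochastic hD')
            (le_one_of_mem_doublyStochastic hD')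
    _ = ∑ i, ∑ j, D i j ^ 2 + Fintype.card ι := by
        simp [Finset.sum_add_distrib, sum_row_of_mem_doublyStochastic hD']

theorem sum_sub_permMatrix_sq (A : Matrix ι ι ℝ) (σ : Equiv.Perm ι) :
    ∑ i, ∑ j, (A - σ.permMatrix ℝ) i j ^ 2
      = ∑ i, ∑ j, A i j ^ 2 + Fintype.card ι - 2 * ∑ i, A i (σ i) := by
  have hrow (i : ι) : ∑ j, (A - σ.permMatrix ℝ) i j ^ 2 = ∑ j, A i j ^ 2 + 1 - 2 * A i (σ i) := by
    have hentry (j : ι) :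
        (A - σ.permMatrix ℝ) i j ^ 2 = A i j ^ 2 + if σ i = j then 1 - 2 * A i j else 0 := by
      by_cases h : σ i = j
      · simp [h]; ring
      · simp [h]
    simp only [hentry, Finset.sum_add_distrib, Finset.sum_ite_eq, Finset.mem_univ, if_true]
    ring
  simp only [hrow, Finset.sum_sub_distrib, Finset.sum_add_distrib, Finset.mul_sum]
  simp

end Sums

theorem sq_csSup_mem_Icc {S : Set ℝ} {a b r₀ : ℝ} (hS : ∀ r ∈ S, 0 ≤ r ∧ r ^ 2 ≤ b)
    (hr₀ : r₀ ∈ S) (ha : a ≤ r₀ ^ 2) : sSup S ^ 2 ∈ Set.Icc a b := by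
  have hbdd : ∀ r ∈ S, r ≤ √b := fun r hr => Real.le_sqrt_of_sq_le (hS r hr).2
  have hr₀_le : r₀ ≤ sSup S := le_csSup ⟨√b, hbdd⟩ hr₀
  have hsup_le : sSup S ≤ √b := csSup_le ⟨r₀, hr₀⟩ hbdd
  have hsup_nonneg : 0 ≤ sSup S := (hS r₀ hr₀).1.trans hr₀_le
  have hb : 0 ≤ b := (sq_nonneg r₀).trans (hS r₀ hr₀).2
  exact ⟨ha.trans (pow_le_pow_left₀ (hS r₀ hr₀).1 hr₀_le 2),
    (Real.le_sqrt hsup_nonneg hb).mp hsup_le⟩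

theorem abs_div_sub_one_le_one_div {x c m : ℝ} (hm : 0 < m) (hmc : m ≤ c) (hx : |x - c| ≤ 1) :
    |x / c - 1| ≤ 1 / m := by
  have hc : 0 < c := hm.trans_le hmc
  rw [div_sub_one hc.ne', abs_div, abs_of_pos hc]
  exact div_le_div₀ zero_le_one hx hm hmc

theorem frobNorm_sq {n : ℕ} (A : Matrix (Fin n) (Fin n) ℝ) :
    frobNorm A ^ 2 = ∑ i, ∑ j, A i j ^ 2 :=
  Real.sq_sqrt (by positivity)

theorem frobNorm_sub_sq_le {n : ℕ} {D D' : Matrix (Fin n) (Fin n) ℝ}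
    (hD : D ∈ doublyStochastic ℝ (Fin n)) (hD' : D' ∈ doublyStochastic ℝ (Fin n)) :
    frobNorm (D - D') ^ 2 ≤ frobNorm D ^ 2 + n := by
  have := sum_sub_sq_le_of_mem_doublyStochastic (D := D)
    (fun _ _ => nonneg_of_mem_doublyStochastic hD) hD'
  rwa [Fintype.card_fin, ← frobNorm_sq, ← frobNorm_sq] at this

theorem exists_le_frobNorm_sub_sq {n : ℕ} [NeZero n] {D : Matrix (Fin n) (Fin n) ℝ}
    (hD : D ∈ doublyStochastic ℝ (Fin n)) :
    ∃ D' ∈ doublyStochastic ℝ (Fin n), frobNorm D ^ 2 + n - 2 ≤ frobNorm (D - D') ^ 2 := by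
  obtain ⟨σ, hσ⟩ := exists_perm_card_mul_sum_apply_le D
  have hn : (0 : ℝ) < n := Nat.cast_pos.mpr (Nat.pos_of_neZero n)
  have htrace : ∑ i, D i (σ i) ≤ 1 := by
    refine le_of_mul_le_mul_left ?_ hn
    simpa [sum_row_of_mem_doublyStochastic hD] using hσ
  refine ⟨σ.permMatrix ℝ, permMatrix_mem_doublyStochastic, ?_⟩
  rw [frobNorm_sq, frobNorm_sq, sum_sub_permMatrix_sq, Fintype.card_fin]
  linarith

/-- For `n ≥ 1` and `D` doubly stochastic, with
`r_F(D) = max_{D' ∈ Ω_n} ‖D − D'‖_F`, one has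
`| r_F(D)² / (‖D‖_F² + n − 1) − 1 | ≤ 1/n`. -/
theorem frob_bounding_radius_ratio {n : ℕ} (hn : 1 ≤ n) (D : Matrix (Fin n) (Fin n) ℝ)
    (hD : D ∈ doublyStochastic ℝ (Fin n)) :
    |sSup {r : ℝ | ∃ D' ∈ doublyStochastic ℝ (Fin n), r = frobNorm (D - D')} ^ 2 /
        (frobNorm D ^ 2 + (n : ℝ) - 1) - 1| ≤ 1 / (n : ℝ) := by
  have : NeZero n := ⟨by omega⟩
  obtain ⟨P, hP, hPfar⟩ := exists_le_frobNorm_sub_sq hD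
  set S := {r : ℝ | ∃ D' ∈ doublyStochastic ℝ (Fin n), r = frobNorm (D - D')}
  obtain ⟨hlo, hhi⟩ := sq_csSup_mem_Icc (S := S) (b := frobNorm D ^ 2 + n)
    (by rintro _ ⟨D', hD', rfl⟩; exact ⟨Real.sqrt_nonneg _, frobNorm_sub_sq_le hD hD'⟩)
    ⟨P, hP, rfl⟩ hPfar
  have hD_one : 1 ≤ frobNorm D ^ 2 := by
    simpa [frobNorm_sq] using one_le_sum_sq_of_mem_doublyStochastic hD
  refine abs_div_sub_one_le_one_div (by positivity) (by linarith) (abs_le.mpr ⟨?_, ?_⟩) <;>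
    linarith
end

section
/- Let n ≥ 1 and 1 ≤ p < ∞. The Chebyshev radius of the Birkhoff polytope Ω_n relative to the Schatten p-norm with unconstrained center, namely inf over all n × n real matrices A of max_{D ∈ Ω_n} ‖A − D‖_{S_p}, equals (n − 1)^{1/p}, and this infimum is attained at A = J_n, i.e., max_{D ∈ Ω_n} ‖J_n − D‖_{S_p} = (n − 1)^{1/p}. -/
open Matrix BigOperators

/-!
At `J_n`: for `D` doubly stochastic, `(J - D)ᴴ(J - D) = DᴴD - JᴴJ`, so `J - D` is an `ℓ²`
contraction (every singular value is at most `1`) and it kills the all-ones vector (one singular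
value is `0`); hence `‖J - D‖_p^p ≤ n - 1`. For a permutation matrix `P`, `(J - P)ᴴ(J - P) = 1 - J`
is a projection of rank `n - 1`, so equality holds and `‖J - P‖_q = (n - 1)^{1/q}` for every `q`.

For an arbitrary centre `A`: the `n` cyclic shift matrices `P_k` sum to `n J`, so the traces
`tr((A - P_k)ᴴ(J - P_k))` average to `n - 1`. For a shift with trace at least `n - 1`, Hölder's
inequality for Schatten norms gives `n - 1 ≤ ‖A - P_k‖_p (n - 1)^{1/q}`. Hölder is proved by
evaluating the trace in the right singular basis of the factor whose exponent is at most `2` and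
bounding the other factor by the Schur–Jensen inequality `∑ ‖X b_k‖^p ≤ ∑ σ_k(X)^p` (`p ≥ 2`).
-/

open scoped RealInnerProductSpace

section Spectral

variable {ι : Type*} [Fintype ι] [DecidableEq ι]

theorem trace_conjTranspose_mul_eq_sum_inner (X Y : Matrix ι ι ℝ)
    (b : OrthonormalBasis ι ℝ (EuclideanSpace ℝ ι)) :
    (Xᴴ * Y).trace = ∑ k, ⟪toEuclideanLin X (b k), toEuclideanLin Y (b k)⟫ := by
  rw [← trace_toLin_eq (Xᴴ * Y) (EuclideanSpace.basisFun ι ℝ).toBasis,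
    ← toEuclideanLin_eq_toLin_orthonormal, LinearMap.trace_eq_sum_inner _ b]
  refine Finset.sum_congr rfl fun k _ => ?_
  rw [toLpLin_mul_same, LinearMap.comp_apply, toEuclideanLin_conjTranspose_eq_adjoint,
    LinearMap.adjoint_inner_right]

theorem norm_sq_toEuclideanLin (X : Matrix ι ι ℝ) (v : EuclideanSpace ℝ ι) :
    ‖toEuclideanLin X v‖ ^ 2 = ⟪v, toEuclideanLin (Xᴴ * X) v⟫ := by
  rw [toLpLin_mul_same, LinearMap.comp_apply, toEuclideanLin_conjTranspose_eq_adjoint,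
    LinearMap.adjoint_inner_right, real_inner_self_eq_norm_sq]

theorem Matrix.IsHermitian.toEuclideanLin_eigenvectorBasis {M : Matrix ι ι ℝ}
    (hM : M.IsHermitian) (j : ι) :
    toEuclideanLin M (hM.eigenvectorBasis j) = hM.eigenvalues j • hM.eigenvectorBasis j := by
  rw [toLpLin_apply, hM.mulVec_eigenvectorBasis]
  rfl

theorem Matrix.IsHermitian.inner_toEuclideanLin_self {M : Matrix ι ι ℝ} (hM : M.IsHermitian)
    (v : EuclideanSpace ℝ ι) :
    ⟪v, toEuclideanLin M v⟫ = ∑ j, hM.eigenvalues j * ⟪hM.eigenvectorBasis j, v⟫ ^ 2 := by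
  rw [← hM.eigenvectorBasis.sum_inner_mul_inner]
  refine Finset.sum_congr rfl fun j _ => ?_
  rw [← (isSymmetric_toEuclideanLin_iff.mpr hM) _ v, hM.toEuclideanLin_eigenvectorBasis,
    real_inner_smul_left, real_inner_comm]
  ring

theorem Matrix.IsHermitian.eigenvalues_eq_zero_or_one {M : Matrix ι ι ℝ} (hM : M.IsHermitian)
    (hMM : IsIdempotentElem M) (j : ι) : hM.eigenvalues j = 0 ∨ hM.eigenvalues j = 1 := by
  have h : (hM.eigenvalues j * hM.eigenvalues j) • hM.eigenvectorBasis j =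
      hM.eigenvalues j • hM.eigenvectorBasis j := by
    rw [mul_smul, ← hM.toEuclideanLin_eigenvectorBasis, ← map_smul,
      ← hM.toEuclideanLin_eigenvectorBasis, ← LinearMap.comp_apply, ← toLpLin_mul_same,
      hMM.eq]
  have hne : hM.eigenvectorBasis j ≠ 0 := hM.eigenvectorBasis.orthonormal.ne_zero j
  have hroot : hM.eigenvalues j * (hM.eigenvalues j - 1) = 0 := by
    rw [mul_sub, mul_one, sub_eq_zero]
    exact smul_left_injective ℝ hne h
  rcases mul_eq_zero.mp hroot with h0 | h1
  · exact Or.inl h0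
  · exact Or.inr (sub_eq_zero.mp h1)

theorem conjTranspose_permMatrix_mul_self (σ : Equiv.Perm ι) :
    (σ.permMatrix ℝ)ᴴ * σ.permMatrix ℝ = 1 := by
  rw [conjTranspose_permMatrix, ← permMatrix_mul, mul_inv_cancel, permMatrix_one]

end Spectral

theorem Real.rpow_eq_sq_rpow_div_two {t : ℝ} (ht : 0 ≤ t) (p : ℝ) :
    t ^ p = (t ^ 2) ^ (p / 2) := by
  rw [← Real.rpow_natCast, ← Real.rpow_mul ht, Nat.cast_ofNat, mul_div_cancel₀ p two_ne_zero]

theorem sum_rpow_le_card_sub_one {ι : Type*} [Fintype ι] {f : ι → ℝ} {p : ℝ} (hp : 0 < p)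
    (h0 : ∀ i, 0 ≤ f i) (h1 : ∀ i, f i ≤ 1) {i₀ : ι} (hi₀ : f i₀ = 0) :
    ∑ i, f i ^ p ≤ Fintype.card ι - 1 := by
  classical
  rw [← Finset.sum_erase_add _ _ (Finset.mem_univ i₀), hi₀, Real.zero_rpow hp.ne', add_zero]
  calc ∑ i ∈ Finset.univ.erase i₀, f i ^ p ≤ ∑ i ∈ Finset.univ.erase i₀, (1 : ℝ) :=
        Finset.sum_le_sum fun i _ => Real.rpow_le_one (h0 i) (h1 i) hp.le
    _ = Fintype.card ι - 1 := by
        rw [Finset.sum_const, Finset.card_erase_of_mem (Finset.mem_univ i₀), nsmul_one,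
          Finset.card_univ, Nat.cast_pred (Fintype.card_pos_iff.mpr ⟨i₀⟩)]

section SingularValues

variable {n : ℕ}

noncomputable abbrev rightSingularBasis (X : Matrix (Fin n) (Fin n) ℝ) :
    OrthonormalBasis (Fin n) ℝ (EuclideanSpace ℝ (Fin n)) :=
  (isHermitian_conjTranspose_mul_self X).eigenvectorBasis

theorem singularValues_nonneg (X : Matrix (Fin n) (Fin n) ℝ) (i : Fin n) :
    0 ≤ singularValues X i :=
  Real.sqrt_nonneg _

theorem sq_singularValues (X : Matrix (Fin n) (Fin n) ℝ) (i : Fin n) :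
    singularValues X i ^ 2 = (isHermitian_conjTranspose_mul_self X).eigenvalues i :=
  Real.sq_sqrt (eigenvalues_conjTranspose_mul_self_nonneg X i)

theorem norm_sq_toEuclideanLin_eq_sum (X : Matrix (Fin n) (Fin n) ℝ)
    (v : EuclideanSpace ℝ (Fin n)) :
    ‖toEuclideanLin X v‖ ^ 2 =
      ∑ j, ⟪rightSingularBasis X j, v⟫ ^ 2 * singularValues X j ^ 2 := by
  rw [norm_sq_toEuclideanLin, (isHermitian_conjTranspose_mul_self X).inner_toEuclideanLin_self]
  simp only [sq_singularValues, mul_comm]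

theorem norm_toEuclideanLin_rightSingularBasis (X : Matrix (Fin n) (Fin n) ℝ) (i : Fin n) :
    ‖toEuclideanLin X (rightSingularBasis X i)‖ = singularValues X i := by
  refine (sq_eq_sq₀ (norm_nonneg _) (singularValues_nonneg X i)).mp ?_
  rw [norm_sq_toEuclideanLin_eq_sum, Finset.sum_eq_single i]
  · rw [real_inner_self_eq_norm_sq, (rightSingularBasis X).orthonormal.1 i]
    ring
  · intro j _ hji
    rw [(rightSingularBasis X).orthonormal.2 hji]
    ring
  · simp

theorem sum_norm_toEuclideanLin_rpow_le {p : ℝ} (hp : 2 ≤ p) (X : Matrix (Fin n) (Fin n) ℝ)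
    (b : OrthonormalBasis (Fin n) ℝ (EuclideanSpace ℝ (Fin n))) :
    ∑ k, ‖toEuclideanLin X (b k)‖ ^ p ≤ ∑ j, singularValues X j ^ p := by
  set e := rightSingularBasis X
  calc ∑ k, ‖toEuclideanLin X (b k)‖ ^ p
      = ∑ k, (∑ j, ⟪e j, b k⟫ ^ 2 * singularValues X j ^ 2) ^ (p / 2) := by
        simp only [Real.rpow_eq_sq_rpow_div_two (norm_nonneg _), norm_sq_toEuclideanLin_eq_sum, e]
    _ ≤ ∑ k, ∑ j, ⟪e j, b k⟫ ^ 2 * (singularValues X j ^ 2) ^ (p / 2) := by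
        gcongr with k
        refine Real.rpow_arith_mean_le_arith_mean_rpow _ _ _ (fun j _ => sq_nonneg _) ?_
          (fun j _ => sq_nonneg _) (by linarith)
        rw [e.sum_sq_inner_right, b.orthonormal.1 k, one_pow]
    _ = ∑ j, singularValues X j ^ p := by
        rw [Finset.sum_comm]
        refine Finset.sum_congr rfl fun j _ => ?_
        rw [← Finset.sum_mul, b.sum_sq_inner_left, e.orthonormal.1 j, one_pow, one_mul,
          ← Real.rpow_eq_sq_rpow_div_two (singularValues_nonneg X j)]

theorem singularValues_le_of_norm_le {X : Matrix (Fin n) (Fin n) ℝ} {C : ℝ}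
    (hX : ∀ v, ‖toEuclideanLin X v‖ ≤ C * ‖v‖) (i : Fin n) :
    singularValues X i ≤ C := by
  simpa [← norm_toEuclideanLin_rightSingularBasis, (rightSingularBasis X).orthonormal.1 i]
    using hX (rightSingularBasis X i)

theorem singularValues_eq_zero_or_one {X : Matrix (Fin n) (Fin n) ℝ}
    (hX : IsIdempotentElem (Xᴴ * X)) (i : Fin n) :
    singularValues X i = 0 ∨ singularValues X i = 1 := by
  rcases (isHermitian_conjTranspose_mul_self X).eigenvalues_eq_zero_or_one hX i with h | h
  · left; rw [singularValues, h, Real.sqrt_zero]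
  · right; rw [singularValues, h, Real.sqrt_one]

theorem exists_singularValues_eq_zero {X : Matrix (Fin n) (Fin n) ℝ} (hX : X.det = 0) :
    ∃ i, singularValues X i = 0 := by
  have hprod := (isHermitian_conjTranspose_mul_self X).det_eq_prod_eigenvalues
  rw [det_mul, hX, mul_zero, eq_comm] at hprod
  obtain ⟨i, -, hi⟩ := Finset.prod_eq_zero_iff.mp hprod
  exact ⟨i, by rw [singularValues, RCLike.ofReal_eq_zero.mp hi, Real.sqrt_zero]⟩

theorem schattenNorm_nonneg (p : ℝ) (X : Matrix (Fin n) (Fin n) ℝ) : 0 ≤ schattenNorm p X :=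
  Real.rpow_nonneg (Finset.sum_nonneg fun i _ => Real.rpow_nonneg (singularValues_nonneg X i) p) _

theorem schattenNorm_le_of_singularValues_le {p C : ℝ} (hp : 0 < p)
    {X : Matrix (Fin n) (Fin n) ℝ} (hX : ∀ i, singularValues X i ≤ C) :
    schattenNorm p X ≤ (n * C ^ p) ^ (1 / p) := by
  refine Real.rpow_le_rpow
    (Finset.sum_nonneg fun i _ => Real.rpow_nonneg (singularValues_nonneg X i) p) ?_
    (one_div_nonneg.mpr hp.le)
  calc ∑ i, singularValues X i ^ p ≤ ∑ _i : Fin n, C ^ p := by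
        gcongr with i
        · exact singularValues_nonneg X i
        · exact hX i
    _ = n * C ^ p := by simp

theorem trace_conjTranspose_mul_le_sum_norm_mul_norm (X Y : Matrix (Fin n) (Fin n) ℝ)
    (b : OrthonormalBasis (Fin n) ℝ (EuclideanSpace ℝ (Fin n))) :
    (Xᴴ * Y).trace ≤ ∑ k, ‖toEuclideanLin X (b k)‖ * ‖toEuclideanLin Y (b k)‖ := by
  rw [trace_conjTranspose_mul_eq_sum_inner X Y b]
  exact Finset.sum_le_sum fun k _ => real_inner_le_norm _ _

theorem trace_conjTranspose_mul_le_schattenNorm_mul {p q : ℝ} (hpq : p.HolderConjugate q)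
    (X Y : Matrix (Fin n) (Fin n) ℝ) :
    (Xᴴ * Y).trace ≤ schattenNorm p X * schattenNorm q Y := by
  -- One of two conjugate exponents is at least `2`; by symmetry it is `p`.
  wlog hp : 2 ≤ p generalizing p q X Y
  · have hq : 2 ≤ q := by
      rw [hpq.conjugate_eq, le_div_iff₀ (by linarith [hpq.lt])]
      linarith
    rw [← star_trivial (Xᴴ * Y).trace, ← trace_conjTranspose, conjTranspose_mul,
      conjTranspose_conjTranspose, mul_comm]
    exact this hpq.symm Y X hq
  set e := rightSingularBasis Y
  calc (Xᴴ * Y).trace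
      ≤ ∑ k, ‖toEuclideanLin X (e k)‖ * ‖toEuclideanLin Y (e k)‖ :=
        trace_conjTranspose_mul_le_sum_norm_mul_norm X Y e
    _ ≤ (∑ k, ‖toEuclideanLin X (e k)‖ ^ p) ^ (1 / p) *
          (∑ k, ‖toEuclideanLin Y (e k)‖ ^ q) ^ (1 / q) :=
        Real.inner_le_Lp_mul_Lq_of_nonneg _ hpq (fun _ _ => norm_nonneg _)
          (fun _ _ => norm_nonneg _)
    _ ≤ schattenNorm p X * schattenNorm q Y := by
        simp only [e, norm_toEuclideanLin_rightSingularBasis]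
        refine mul_le_mul_of_nonneg_right ?_ (schattenNorm_nonneg q Y)
        exact Real.rpow_le_rpow (Finset.sum_nonneg fun _ _ => by positivity)
          (sum_norm_toEuclideanLin_rpow_le hp X _) (one_div_nonneg.mpr hpq.nonneg)

theorem trace_conjTranspose_mul_le_schattenNorm_one (X : Matrix (Fin n) (Fin n) ℝ)
    {Y : Matrix (Fin n) (Fin n) ℝ} (hY : ∀ v, ‖toEuclideanLin Y v‖ ≤ ‖v‖) :
    (Xᴴ * Y).trace ≤ schattenNorm 1 X := by
  set e := rightSingularBasis X
  calc (Xᴴ * Y).trace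
      ≤ ∑ k, ‖toEuclideanLin X (e k)‖ * ‖toEuclideanLin Y (e k)‖ :=
        trace_conjTranspose_mul_le_sum_norm_mul_norm X Y e
    _ ≤ ∑ k, singularValues X k := by
        refine Finset.sum_le_sum fun k _ => ?_
        rw [norm_toEuclideanLin_rightSingularBasis]
        calc singularValues X k * ‖toEuclideanLin Y (e k)‖ ≤ singularValues X k * ‖e k‖ :=
              mul_le_mul_of_nonneg_left (hY _) (singularValues_nonneg X k)
          _ = singularValues X k := by rw [e.orthonormal.1 k, mul_one]
    _ = schattenNorm 1 X := by simp [schattenNorm]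

end SingularValues

section DoublyStochastic

variable {n : ℕ}

theorem norm_toEuclideanLin_le_of_mem_doublyStochastic {D : Matrix (Fin n) (Fin n) ℝ}
    (hD : D ∈ doublyStochastic ℝ (Fin n)) (v : EuclideanSpace ℝ (Fin n)) :
    ‖toEuclideanLin D v‖ ≤ ‖v‖ := by
  rw [← sq_le_sq₀ (norm_nonneg _) (norm_nonneg _), EuclideanSpace.real_norm_sq_eq,
    EuclideanSpace.real_norm_sq_eq]
  calc ∑ i, (∑ j, D i j * v j) ^ 2
      ≤ ∑ i, ∑ j, D i j * v j ^ 2 := by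
        gcongr with i
        simpa only [smul_eq_mul] using (even_two.convexOn_pow (𝕜 := ℝ)).map_sum_le
          (fun j _ => nonneg_of_mem_doublyStochastic hD) (sum_row_of_mem_doublyStochastic hD i)
          (fun j _ => Set.mem_univ _)
    _ = ∑ j, v j ^ 2 := by
        rw [Finset.sum_comm]
        simp only [← Finset.sum_mul, sum_col_of_mem_doublyStochastic hD, one_mul]

theorem matJ_mul_of_mem_doublyStochastic {D : Matrix (Fin n) (Fin n) ℝ}
    (hD : D ∈ doublyStochastic ℝ (Fin n)) : matJ n * D = matJ n := by
  ext i j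
  simp [matJ, mul_apply, ← Finset.mul_sum, sum_col_of_mem_doublyStochastic hD]

theorem mul_matJ_of_mem_doublyStochastic {D : Matrix (Fin n) (Fin n) ℝ}
    (hD : D ∈ doublyStochastic ℝ (Fin n)) : D * matJ n = matJ n := by
  ext i j
  simp [matJ, mul_apply, ← Finset.sum_mul, sum_row_of_mem_doublyStochastic hD]

@[simp]
theorem conjTranspose_matJ : (matJ n)ᴴ = matJ n := by
  ext i j
  simp [matJ]

theorem matJ_mem_doublyStochastic [NeZero n] : matJ n ∈ doublyStochastic ℝ (Fin n) := by
  rw [mem_doublyStochastic_iff_sum]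
  refine ⟨fun i j => by simp [matJ], fun i => ?_, fun j => ?_⟩ <;> simp [matJ]

theorem conjTranspose_matJ_sub_mul_self [NeZero n] {D : Matrix (Fin n) (Fin n) ℝ}
    (hD : D ∈ doublyStochastic ℝ (Fin n)) :
    (matJ n - D)ᴴ * (matJ n - D) = Dᴴ * D - (matJ n)ᴴ * matJ n := by
  have hDJ : Dᴴ * matJ n = matJ n := mul_matJ_of_mem_doublyStochastic <| by
    rwa [conjTranspose_eq_transpose_of_trivial, transpose_mem_doublyStochastic_iff]
  rw [conjTranspose_sub, sub_mul, mul_sub, mul_sub, hDJ, conjTranspose_matJ,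
    matJ_mul_of_mem_doublyStochastic hD,
    mul_matJ_of_mem_doublyStochastic matJ_mem_doublyStochastic]
  abel

theorem norm_toEuclideanLin_matJ_sub_le [NeZero n] {D : Matrix (Fin n) (Fin n) ℝ}
    (hD : D ∈ doublyStochastic ℝ (Fin n)) (v : EuclideanSpace ℝ (Fin n)) :
    ‖toEuclideanLin (matJ n - D) v‖ ≤ ‖v‖ := by
  have h : ‖toEuclideanLin (matJ n - D) v‖ ^ 2 =
      ‖toEuclideanLin D v‖ ^ 2 - ‖toEuclideanLin (matJ n) v‖ ^ 2 := by
    rw [norm_sq_toEuclideanLin, conjTranspose_matJ_sub_mul_self hD, map_sub,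
      LinearMap.sub_apply, inner_sub_right, ← norm_sq_toEuclideanLin, ← norm_sq_toEuclideanLin]
  rw [← sq_le_sq₀ (norm_nonneg _) (norm_nonneg _), h]
  nlinarith [norm_toEuclideanLin_le_of_mem_doublyStochastic hD v,
    norm_nonneg (toEuclideanLin D v), sq_nonneg ‖toEuclideanLin (matJ n) v‖]

theorem det_matJ_sub_eq_zero [NeZero n] {D : Matrix (Fin n) (Fin n) ℝ}
    (hD : D ∈ doublyStochastic ℝ (Fin n)) : (matJ n - D).det = 0 := by
  rw [← exists_mulVec_eq_zero_iff]
  refine ⟨1, one_ne_zero, ?_⟩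
  rw [sub_mulVec, mulVec_one_of_mem_doublyStochastic hD,
    mulVec_one_of_mem_doublyStochastic matJ_mem_doublyStochastic, sub_self]

theorem trace_matJ [NeZero n] : (matJ n).trace = 1 := by
  simp [trace, matJ]

theorem schattenNorm_matJ_sub_le [NeZero n] {p : ℝ} (hp : 0 < p)
    {D : Matrix (Fin n) (Fin n) ℝ} (hD : D ∈ doublyStochastic ℝ (Fin n)) :
    schattenNorm p (matJ n - D) ≤ ((n : ℝ) - 1) ^ (1 / p) := by
  obtain ⟨i₀, hi₀⟩ := exists_singularValues_eq_zero (det_matJ_sub_eq_zero hD)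
  have hle : ∀ i, singularValues (matJ n - D) i ≤ 1 :=
    singularValues_le_of_norm_le fun v => (one_mul ‖v‖).symm ▸ norm_toEuclideanLin_matJ_sub_le hD v
  have hsum := sum_rpow_le_card_sub_one hp (singularValues_nonneg _) hle hi₀
  rw [Fintype.card_fin] at hsum
  exact Real.rpow_le_rpow
    (Finset.sum_nonneg fun i _ => Real.rpow_nonneg (singularValues_nonneg _ i) p) hsum
    (one_div_nonneg.mpr hp.le)

theorem schattenNorm_matJ_sub_permMatrix [NeZero n] {q : ℝ} (hq : 0 < q)
    (σ : Equiv.Perm (Fin n)) :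
    schattenNorm q (matJ n - σ.permMatrix ℝ) = ((n : ℝ) - 1) ^ (1 / q) := by
  set X := matJ n - σ.permMatrix ℝ
  have hJJ : IsIdempotentElem (matJ n) :=
    mul_matJ_of_mem_doublyStochastic matJ_mem_doublyStochastic
  have hX : Xᴴ * X = 1 - matJ n := by
    rw [conjTranspose_matJ_sub_mul_self permMatrix_mem_doublyStochastic,
      conjTranspose_permMatrix_mul_self, conjTranspose_matJ, hJJ.eq]
  have hidem : IsIdempotentElem (Xᴴ * X) := hX ▸ hJJ.one_sub
  -- `XᴴX` is a projection, so every singular value is `0` or `1`.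
  have hsum : ∑ i, singularValues X i ^ q = (n : ℝ) - 1 :=
    calc ∑ i, singularValues X i ^ q = ∑ i, singularValues X i ^ 2 := by
          refine Finset.sum_congr rfl fun i _ => ?_
          rcases singularValues_eq_zero_or_one hidem i with h | h <;>
            simp [h, Real.zero_rpow hq.ne']
      _ = (Xᴴ * X).trace := by
          simp only [sq_singularValues, RCLike.ofReal_real_eq_id, id,
            (isHermitian_conjTranspose_mul_self X).trace_eq_sum_eigenvalues]
      _ = (n : ℝ) - 1 := by rw [hX, trace_sub, trace_one, trace_matJ, Fintype.card_fin]
  rw [schattenNorm, hsum]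

theorem isGreatest_schattenNorm_matJ_sub [NeZero n] {p : ℝ} (hp : 0 < p) :
    IsGreatest {r : ℝ | ∃ D ∈ doublyStochastic ℝ (Fin n), r = schattenNorm p (matJ n - D)}
      (((n : ℝ) - 1) ^ (1 / p)) := by
  refine ⟨⟨_, permMatrix_mem_doublyStochastic, (schattenNorm_matJ_sub_permMatrix hp 1).symm⟩, ?_⟩
  rintro r ⟨D, hD, rfl⟩
  exact schattenNorm_matJ_sub_le hp hD

theorem bddAbove_schattenNorm_sub {p : ℝ} (hp : 0 < p) (A : Matrix (Fin n) (Fin n) ℝ) :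
    BddAbove {r : ℝ | ∃ D ∈ doublyStochastic ℝ (Fin n), r = schattenNorm p (A - D)} := by
  obtain ⟨C, hC⟩ : ∃ C, ∀ v, ‖toEuclideanLin A v‖ ≤ C * ‖v‖ :=
    ⟨_, (LinearMap.toContinuousLinearMap (toEuclideanLin A)).le_opNorm⟩
  refine ⟨(n * (C + 1) ^ p) ^ (1 / p), ?_⟩
  rintro r ⟨D, hD, rfl⟩
  refine schattenNorm_le_of_singularValues_le hp (singularValues_le_of_norm_le fun v => ?_)
  rw [map_sub, LinearMap.sub_apply, add_mul, one_mul]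
  exact (norm_sub_le _ _).trans
    (add_le_add (hC v) (norm_toEuclideanLin_le_of_mem_doublyStochastic hD v))

theorem sum_permMatrix_addRight [NeZero n] :
    ∑ k : Fin n, (Equiv.addRight k).permMatrix ℝ = (n : ℝ) • matJ n := by
  ext i j
  simp only [matJ, Matrix.sum_apply, PEquiv.toMatrix_apply, Equiv.toPEquiv_apply,
    Equiv.coe_addRight, Option.mem_def, Option.some.injEq, Finset.sum_boole, Matrix.smul_apply,
    of_apply, smul_eq_mul, mul_inv_cancel_of_invertible, Nat.cast_eq_one]
  exact Finset.card_eq_one.mpr ⟨j - i, by ext x; simp [eq_sub_iff_add_eq']⟩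

end DoublyStochastic

section LowerBound

variable {n : ℕ} [NeZero n]

theorem exists_le_trace_conjTranspose_sub_mul (A : Matrix (Fin n) (Fin n) ℝ) :
    ∃ σ : Equiv.Perm (Fin n),
      (n : ℝ) - 1 ≤ ((A - σ.permMatrix ℝ)ᴴ * (matJ n - σ.permMatrix ℝ)).trace := by
  set P : Fin n → Matrix (Fin n) (Fin n) ℝ := fun k => (Equiv.addRight k).permMatrix ℝ
  have hexpand : ∀ k,
      (A - P k)ᴴ * (matJ n - P k) = Aᴴ * matJ n - Aᴴ * P k - matJ n + 1 := by
    intro k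
    rw [conjTranspose_sub, sub_mul, mul_sub, mul_sub, conjTranspose_permMatrix_mul_self,
      conjTranspose_permMatrix, mul_matJ_of_mem_doublyStochastic permMatrix_mem_doublyStochastic]
    abel
  -- The shifts tile the all-ones matrix, so the traces average to `n - 1`.
  have hsum : ∑ k, ((A - P k)ᴴ * (matJ n - P k)).trace = ∑ _k : Fin n, ((n : ℝ) - 1) := by
    have hmat : ∑ k, (A - P k)ᴴ * (matJ n - P k) = (n : ℝ) • (1 - matJ n) := by
      simp only [hexpand, Finset.sum_add_distrib, Finset.sum_sub_distrib, ← Finset.mul_sum, P,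
        sum_permMatrix_addRight, Finset.sum_const, Finset.card_univ, Fintype.card_fin,
        Matrix.mul_smul, ← Nat.cast_smul_eq_nsmul ℝ, smul_sub]
      abel
    rw [← trace_sum, hmat, trace_smul, trace_sub, trace_one, trace_matJ, Fintype.card_fin,
      Finset.sum_const, Finset.card_univ, Fintype.card_fin, nsmul_eq_mul, smul_eq_mul]
  obtain ⟨k, -, hk⟩ := Finset.exists_le_of_sum_le Finset.univ_nonempty hsum.ge
  exact ⟨Equiv.addRight k, hk⟩

theorem exists_permMatrix_le_schattenNorm_sub {p : ℝ} (hp : 1 ≤ p)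
    (A : Matrix (Fin n) (Fin n) ℝ) :
    ∃ σ : Equiv.Perm (Fin n), ((n : ℝ) - 1) ^ (1 / p) ≤ schattenNorm p (A - σ.permMatrix ℝ) := by
  obtain ⟨σ, hσ⟩ := exists_le_trace_conjTranspose_sub_mul A
  refine ⟨σ, ?_⟩
  rcases hp.eq_or_lt with rfl | hp
  · rw [div_one, Real.rpow_one]
    exact hσ.trans (trace_conjTranspose_mul_le_schattenNorm_one _
      (norm_toEuclideanLin_matJ_sub_le permMatrix_mem_doublyStochastic))
  have hpq := Real.HolderConjugate.conjExponent hp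
  have hHolder := trace_conjTranspose_mul_le_schattenNorm_mul hpq (A - σ.permMatrix ℝ)
    (matJ n - σ.permMatrix ℝ)
  rw [schattenNorm_matJ_sub_permMatrix hpq.symm.pos] at hHolder
  have hn : (0 : ℝ) ≤ n - 1 := sub_nonneg.mpr (Nat.one_le_cast.mpr NeZero.one_le)
  rcases hn.eq_or_lt with h0 | hpos
  · rw [← h0, Real.zero_rpow (one_div_ne_zero hpq.pos.ne')]
    exact schattenNorm_nonneg _ _
  refine le_of_mul_le_mul_right ?_ (Real.rpow_pos_of_pos hpos (1 / p.conjExponent))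
  have hexp : 1 / p + 1 / p.conjExponent = 1 := by
    rw [one_div, one_div, hpq.inv_add_inv_eq_one]
  rw [← Real.rpow_add hpos, hexp, Real.rpow_one]
  exact hσ.trans hHolder

theorem le_sSup_schattenNorm_sub {p : ℝ} (hp : 1 ≤ p) (A : Matrix (Fin n) (Fin n) ℝ) :
    ((n : ℝ) - 1) ^ (1 / p) ≤
      sSup {r : ℝ | ∃ D ∈ doublyStochastic ℝ (Fin n), r = schattenNorm p (A - D)} := by
  obtain ⟨σ, hσ⟩ := exists_permMatrix_le_schattenNorm_sub hp A
  exact hσ.trans (le_csSup (bddAbove_schattenNorm_sub (by linarith) A)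
    ⟨_, permMatrix_mem_doublyStochastic, rfl⟩)

end LowerBound

/-- For `n ≥ 1` and `1 ≤ p < ∞`, the Chebyshev radius of `Ω_n`
relative to the Schatten `p`-norm with unconstrained center equals `(n − 1)^{1/p}`,
and the infimum is attained at `A = J_n`. -/
theorem chebyshev_radius_schatten {n : ℕ} (hn : 1 ≤ n) {p : ℝ} (hp : 1 ≤ p) :
    (⨅ A : Matrix (Fin n) (Fin n) ℝ,
        sSup {r : ℝ | ∃ D ∈ doublyStochastic ℝ (Fin n), r = schattenNorm p (A - D)}) =
        ((n : ℝ) - 1) ^ (1 / p) ∧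
      sSup {r : ℝ | ∃ D ∈ doublyStochastic ℝ (Fin n), r = schattenNorm p (matJ n - D)} =
        ((n : ℝ) - 1) ^ (1 / p) := by
  have : NeZero n := ⟨by omega⟩
  have hJ := (isGreatest_schattenNorm_matJ_sub (n := n) (by linarith : 0 < p)).csSup_eq
  refine ⟨le_antisymm ?_ (le_ciInf (le_sSup_schattenNorm_sub hp)), hJ⟩
  exact (ciInf_le ⟨_, Set.forall_mem_range.mpr (le_sSup_schattenNorm_sub hp)⟩ (matJ n)).trans_eq hJ
end
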